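/- If a folding of a closed HP chain with h H-labeled monomers, or of an open HP chain with h H-labeled monomers whose two endpoints are labeled P, has exactly h contacts, then its contact graph is a disjoint union of cycles of even length. -/

import Mathlib

/-! ## Basic definitions for the 2D HP model on the square lattice ℤ² -/

/-- A lattice point. -/
abbrev Pt : Type := ℤ × ℤ

/-- Two lattice points are adjacent (at Euclidean distance 1). -/
def adjPt (p q : Pt) : Prop := (p.1 - q.1).natAbs + (p.2 - q.2).natAbs = 1

/-- Chain adjacency (consecutiveness) of monomer indices in an open chain of length `n`. -/
def openAdj (n : ℕ) (i j : Fin n) : Prop := i.val + 1 = j.val ∨ j.val + 1 = i.val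

/-- Chain adjacency of monomer indices in a closed chain of length `n`
(consecutive cyclically, so also the pair `{n-1, 0}`). -/
def closedAdj (n : ℕ) (i j : Fin n) : Prop :=
  (i.val + 1) % n = j.val ∨ (j.val + 1) % n = i.val

/-- A folding of an open chain of `n` monomers: an injective map into ℤ² sending
consecutive monomers to adjacent lattice points. -/
def IsOpenFolding (n : ℕ) (pos : Fin n → Pt) : Prop :=
  Function.Injective pos ∧ ∀ i j : Fin n, i.val + 1 = j.val → adjPt (pos i) (pos j)

/-- A folding of a closed chain of `n` monomers: an injective map into ℤ² sending
cyclically consecutive monomers to adjacent lattice points. -/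
def IsClosedFolding (n : ℕ) (pos : Fin n → Pt) : Prop :=
  Function.Injective pos ∧ ∀ i j : Fin n, (i.val + 1) % n = j.val → adjPt (pos i) (pos j)

/-- Monomers `i` and `j` form a contact in a folding `pos` of the open chain with labels `c`
(`true` = H, `false` = P): both are H, they are not consecutive along the chain, and their
images are lattice-adjacent. -/
def openContactRel (n : ℕ) (c : Fin n → Bool) (pos : Fin n → Pt) (i j : Fin n) : Prop :=
  c i = true ∧ c j = true ∧ ¬ openAdj n i j ∧ adjPt (pos i) (pos j)

/-- Contact relation for a folding of a closed chain. -/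
def closedContactRel (n : ℕ) (c : Fin n → Bool) (pos : Fin n → Pt) (i j : Fin n) : Prop :=
  c i = true ∧ c j = true ∧ ¬ closedAdj n i j ∧ adjPt (pos i) (pos j)

/-- The set of contacts (as unordered pairs) of a folding of an open chain. -/
def openContactSet (n : ℕ) (c : Fin n → Bool) (pos : Fin n → Pt) : Set (Sym2 (Fin n)) :=
  {e | ∃ i j : Fin n, e = s(i, j) ∧ openContactRel n c pos i j}

/-- The set of contacts (as unordered pairs) of a folding of a closed chain. -/
def closedContactSet (n : ℕ) (c : Fin n → Bool) (pos : Fin n → Pt) : Set (Sym2 (Fin n)) :=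
  {e | ∃ i j : Fin n, e = s(i, j) ∧ closedContactRel n c pos i j}

/-- The number of contacts of a folding of an open chain. -/
noncomputable def openContacts (n : ℕ) (c : Fin n → Bool) (pos : Fin n → Pt) : ℕ :=
  (openContactSet n c pos).ncard

/-- The number of contacts of a folding of a closed chain. -/
noncomputable def closedContacts (n : ℕ) (c : Fin n → Bool) (pos : Fin n → Pt) : ℕ :=
  (closedContactSet n c pos).ncard

/-- A folding of an open chain is optimal if it maximizes the number of contacts. -/
def OpenOptimal (n : ℕ) (c : Fin n → Bool) (pos : Fin n → Pt) : Prop :=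
  IsOpenFolding n pos ∧
    ∀ pos', IsOpenFolding n pos' → openContacts n c pos' ≤ openContacts n c pos

/-- A folding of a closed chain is optimal if it maximizes the number of contacts. -/
def ClosedOptimal (n : ℕ) (c : Fin n → Bool) (pos : Fin n → Pt) : Prop :=
  IsClosedFolding n pos ∧
    ∀ pos', IsClosedFolding n pos' → closedContacts n c pos' ≤ closedContacts n c pos

/-- The number of H-labeled monomers of a chain. -/
def hCount (n : ℕ) (c : Fin n → Bool) : ℕ :=
  (Finset.univ.filter fun i : Fin n => c i = true).card

/-- The contact graph of a folding of an open chain. -/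
def openContactGraph (n : ℕ) (c : Fin n → Bool) (pos : Fin n → Pt) : SimpleGraph (Fin n) :=
  SimpleGraph.fromRel (openContactRel n c pos)

/-- The contact graph of a folding of a closed chain. -/
def closedContactGraph (n : ℕ) (c : Fin n → Bool) (pos : Fin n → Pt) : SimpleGraph (Fin n) :=
  SimpleGraph.fromRel (closedContactRel n c pos)

/-- The conformation graph of a folding of a closed chain: chain edges together with contacts. -/
def conformationGraph (n : ℕ) (c : Fin n → Bool) (pos : Fin n → Pt) : SimpleGraph (Fin n) :=
  SimpleGraph.fromRel (fun i j => closedAdj n i j ∨ closedContactRel n c pos i j)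

/-- Squared Euclidean distance between lattice points. -/
def sqDist (p q : Pt) : ℤ := (p.1 - q.1) ^ 2 + (p.2 - q.2) ^ 2

/-- An isometry of the lattice ℤ² (exactly the translations, rotations by multiples of 90°,
reflections, and their compositions). -/
def IsLatticeIsometry (T : Pt → Pt) : Prop :=
  Function.Bijective T ∧ ∀ p q, sqDist (T p) (T q) = sqDist p q

/-- Two foldings are congruent if one is the image of the other under an isometry of ℤ². -/
def FoldingCongruent (n : ℕ) (pos pos' : Fin n → Pt) : Prop :=
  ∃ T : Pt → Pt, IsLatticeIsometry T ∧ ∀ i, pos' i = T (pos i)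

/-! ## Specific chains -/

/-- The chain (PHP)^m (for `n = 3m`): H exactly at positions ≡ 1 mod 3 (0-indexed). -/
def phpLabel (n : ℕ) : Fin n → Bool := fun i => decide (i.val % 3 = 1)

/-- The closed chain `S_k = P (HP)^u P (HP)^d` of length `2k+2`, where
`u = ⌈k/2⌉` and `d = ⌊k/2⌋` (0-indexed labels). -/
def skLabel (k : ℕ) : Fin (2*k+2) → Bool := fun i =>
  if i.val ≤ 2 * ((k+1)/2) then decide (i.val % 2 = 1) else decide (i.val % 2 = 0)

/-- The open chain `Z_{2k} = (HP)^k (PH)^k` of length `4k` (0-indexed labels). -/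
def zLabel (k : ℕ) : Fin (4*k) → Bool := fun i =>
  if i.val < 2*k then decide (i.val % 2 = 0) else decide (i.val % 2 = 1)

/-- The direction of the `j`-th edge of the folding `F_k` of `S_k`:
`E (ES)^d W (WN)^u` when `k` is even and `E (ES)^d S (WN)^u` when `k` is odd,
where `E = (1,0)`, `W = (-1,0)`, `N = (0,1)`, `S = (0,-1)`. -/
def fkDir (k : ℕ) (j : ℕ) : Pt :=
  if j = 0 then (1, 0)
  else if j ≤ 2 * (k/2) then (if j % 2 = 1 then (1, 0) else (0, -1))
  else if j = 2 * (k/2) + 1 then (if k % 2 = 0 then (-1, 0) else (0, -1))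
  else if (j - (2 * (k/2) + 2)) % 2 = 0 then (-1, 0) else (0, 1)

/-- The position of monomer `i` in the folding `F_k` of the closed chain `S_k`. -/
def fkPos (k : ℕ) (i : Fin (2*k+2)) : Pt := ∑ j ∈ Finset.range i.val, fkDir k j

/-- The direction of the `j`-th edge of the standard folding of `Z_{2k}`: the PP edge
(edge `2k-1`) is horizontal, the two edges adjacent to it descend from it, and the two
halves of the chain form two parallel staircases. -/
def stdZDir (k : ℕ) (j : ℕ) : Pt :=
  if j ≤ 2*k - 1 then (if j % 2 = 0 then (0, 1) else (-1, 0))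
  else if j = 2*k then (0, -1)
  else if j % 2 = 1 then (0, -1) else (1, 0)

/-- The position of monomer `i` in the standard folding of the open chain `Z_{2k}`. -/
def stdZPos (k : ℕ) (i : Fin (4*k)) : Pt := ∑ j ∈ Finset.range i.val, stdZDir k j

/-! ## Geometry: polygon of a closed folding, bounding box, missing contacts -/

/-- The real point corresponding to a lattice point. -/
def toR (p : Pt) : ℝ × ℝ := ((p.1 : ℝ), (p.2 : ℝ))

/-- The closed polygonal curve in ℝ² traced by a folded closed chain. -/
def polygonOf (n : ℕ) (pos : Fin n → Pt) : Set (ℝ × ℝ) :=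
  ⋃ i : Fin n, segment ℝ (toR (pos i))
    (toR (pos ⟨(i.val + 1) % n, Nat.mod_lt _ (Nat.lt_of_le_of_lt (Nat.zero_le i.val) i.isLt)⟩))

/-- `q` lies in the (closed) axis-parallel bounding box of the folding `pos`. -/
def inBBox (n : ℕ) (pos : Fin n → Pt) (q : Pt) : Prop :=
  (∃ i, (pos i).1 ≤ q.1) ∧ (∃ i, q.1 ≤ (pos i).1) ∧
  (∃ i, (pos i).2 ≤ q.2) ∧ (∃ i, q.2 ≤ (pos i).2)

/-- `q` lies on the wall `w` of the bounding box of the folding `pos`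
(`0` = east, `1` = west, `2` = north, `3` = south). -/
def onWall (n : ℕ) (pos : Fin n → Pt) (w : Fin 4) (q : Pt) : Prop :=
  inBBox n pos q ∧
    (if w = 0 then ∀ i, (pos i).1 ≤ q.1
     else if w = 1 then ∀ i, q.1 ≤ (pos i).1
     else if w = 2 then ∀ i, (pos i).2 ≤ q.2
     else ∀ i, q.2 ≤ (pos i).2)

/-- The segment from `p` to `q` lies along the boundary of the bounding box
(both endpoints on a common wall). -/
def edgeOnBoundary (n : ℕ) (pos : Fin n → Pt) (p q : Pt) : Prop :=
  ∃ w : Fin 4, onWall n pos w p ∧ onWall n pos w q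

/-- The missing contacts of a folding of an open chain: pairs `(v, q)` where `v` is an
H monomer and `q` is a lattice point adjacent to the image of `v` that is occupied
neither by a chain-neighbor of `v` nor by any H monomer.  The corresponding lattice
edge is the one from `pos v` to `q`. -/
def missingContactSet (n : ℕ) (c : Fin n → Bool) (pos : Fin n → Pt) : Set (Fin n × Pt) :=
  {vq | c vq.1 = true ∧ adjPt (pos vq.1) vq.2 ∧
        (∀ w : Fin n, openAdj n vq.1 w → pos w ≠ vq.2) ∧
        (∀ u : Fin n, c u = true → pos u ≠ vq.2)}

/-- A straight H node: a non-endpoint H monomer lying, together with both of its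
chain-neighbors, on a common wall of the bounding box. -/
def isStraightH (n : ℕ) (c : Fin n → Bool) (pos : Fin n → Pt) (i : Fin n) : Prop :=
  c i = true ∧ i.val ≠ 0 ∧ i.val ≠ n - 1 ∧
  ∃ w : Fin 4, onWall n pos w (pos i) ∧ ∀ j : Fin n, openAdj n i j → onWall n pos w (pos j)

/-- A coupled straight H node: a straight H node such that the preceding or following
H monomer along the chain lies on the same wall. -/
def isCoupledH (n : ℕ) (c : Fin n → Bool) (pos : Fin n → Pt) (i : Fin n) : Prop :=
  isStraightH n c pos i ∧
  ∃ w : Fin 4, onWall n pos w (pos i) ∧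
    ∃ j : Fin n, c j = true ∧ j ≠ i ∧ onWall n pos w (pos j) ∧
      ((j.val < i.val ∧ ∀ l : Fin n, j.val < l.val → l.val < i.val → c l = false) ∨
       (i.val < j.val ∧ ∀ l : Fin n, i.val < l.val → l.val < j.val → c l = false))

/-- A solitary straight H node: a straight H node that is not coupled. -/
def isSolitaryH (n : ℕ) (c : Fin n → Bool) (pos : Fin n → Pt) (i : Fin n) : Prop :=
  isStraightH n c pos i ∧ ¬ isCoupledH n c pos i

/-! ## Graph-theoretic notions -/

/-- A graph is a disjoint union of even cycles (plus isolated vertices): every vertex has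
degree 0 or 2, and the graph has no odd cycles (is 2-colorable). -/
def IsDisjointUnionOfEvenCycles {V : Type*} (G : SimpleGraph V) : Prop :=
  (∀ v, (G.neighborSet v).ncard = 0 ∨ (G.neighborSet v).ncard = 2) ∧ G.Colorable 2

/-- A graph consists of exactly `k` vertex-disjoint 4-cycles (plus isolated vertices). -/
def IsDisjointUnionOfFourCycles {V : Type*} (G : SimpleGraph V) (k : ℕ) : Prop :=
  ∃ f : Fin k × Fin 4 → V, Function.Injective f ∧
    ∀ a b : V, G.Adj a b ↔ ∃ m : Fin k, ∃ i j : Fin 4,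
      a = f (m, i) ∧ b = f (m, j) ∧ ((i.val + 1) % 4 = j.val ∨ (j.val + 1) % 4 = i.val)

/-- The vertex set `s` induces a 4-cycle of `G`: it has 4 elements, each of which has
exactly two neighbors inside `s`. -/
def IsFourCycleIn {V : Type*} (G : SimpleGraph V) (s : Set V) : Prop :=
  s.ncard = 4 ∧ ∀ v ∈ s, (s ∩ {u | G.Adj v u}).ncard = 2

/-- The chain position of the `a`-th H monomer (0-indexed) of the closed chain `S_k`. -/
def hIdx (k : ℕ) (a : Fin k) : Fin (2*k+2) :=
  if a.val + 1 ≤ (k+1)/2 then ⟨2*a.val+1, by have := a.isLt; omega⟩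
  else ⟨2*a.val+2, by have := a.isLt; omega⟩
lemma adjPt_symm {p q : Pt} (h : adjPt p q) : adjPt q p := by unfold adjPt at *; omega

lemma adjPt_irrefl (p : Pt) : ¬ adjPt p p := by unfold adjPt; omega

lemma adjPt_parity {p q : Pt} (h : adjPt p q) :
    (p.1 + p.2).natAbs % 2 ≠ (q.1 + q.2).natAbs % 2 := by
  unfold adjPt at h; omega

lemma adjPt_mem {p q : Pt} (h : adjPt p q) :
    q ∈ ({(p.1-1,p.2),(p.1+1,p.2),(p.1,p.2-1),(p.1,p.2+1)} : Finset Pt) := by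
  obtain ⟨q1, q2⟩ := q
  simp only [adjPt] at h
  simp only [Finset.mem_insert, Finset.mem_singleton, Prod.mk.injEq, Prod.ext_iff]
  omega

lemma deg_le_two {n : ℕ} {pos : Fin n → Pt} {r : Fin n → Fin n → Prop}
    (hinj : Function.Injective pos)
    (hadj : ∀ i j, r i j → adjPt (pos i) (pos j))
    (v a b : Fin n) (hab : a ≠ b)
    (hpa : adjPt (pos v) (pos a)) (hpb : adjPt (pos v) (pos b))
    (hnr : ∀ u, r v u ∨ r u v → u ≠ a ∧ u ≠ b) :
    ((SimpleGraph.fromRel r).neighborSet v).ncard ≤ 2 := by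
  classical
  set p := pos v with hp
  set A : Finset Pt := {(p.1-1,p.2),(p.1+1,p.2),(p.1,p.2-1),(p.1,p.2+1)} with hA
  have hsubAB : ({pos a, pos b} : Finset Pt) ⊆ A := by
    intro x hx
    rcases Finset.mem_insert.mp hx with rfl | hx
    · exact adjPt_mem hpa
    · rw [Finset.mem_singleton] at hx; subst hx; exact adjPt_mem hpb
  have hcard : (A \ {pos a, pos b}).card ≤ 2 := by
    have h2 : ({pos a, pos b} : Finset Pt).card = 2 := Finset.card_pair (hinj.ne hab)
    have h4 : A.card ≤ 4 := by
      refine (Finset.card_insert_le _ _).trans (Nat.succ_le_succ ?_)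
      refine (Finset.card_insert_le _ _).trans (Nat.succ_le_succ ?_)
      refine (Finset.card_insert_le _ _).trans (Nat.succ_le_succ ?_)
      simp
    rw [Finset.card_sdiff_of_subset hsubAB, h2]
    omega
  have hsub : pos '' ((SimpleGraph.fromRel r).neighborSet v) ⊆ ↑(A \ {pos a, pos b}) := by
    rintro q ⟨u, hu, rfl⟩
    have hadj' : (SimpleGraph.fromRel r).Adj v u := hu
    rw [SimpleGraph.fromRel_adj] at hadj'
    obtain ⟨hne, hr⟩ := hadj'
    have hvu : adjPt p (pos u) := by
      rcases hr with h | h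
      · exact hadj _ _ h
      · exact adjPt_symm (hadj _ _ h)
    have hub := hnr u hr
    simp only [Finset.coe_sdiff, Set.mem_diff, Finset.coe_insert, Set.mem_insert_iff,
      Finset.coe_singleton, Set.mem_singleton_iff, Finset.mem_coe]
    exact ⟨adjPt_mem hvu, by push_neg; exact ⟨hinj.ne hub.1, hinj.ne hub.2⟩⟩
  calc ((SimpleGraph.fromRel r).neighborSet v).ncard
      = (pos '' ((SimpleGraph.fromRel r).neighborSet v)).ncard :=
        (Set.ncard_image_of_injective _ hinj).symm
    _ ≤ (↑(A \ {pos a, pos b}) : Set Pt).ncard :=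
        Set.ncard_le_ncard hsub (Finset.finite_toSet _)
    _ = (A \ {pos a, pos b}).card := Set.ncard_coe_finset _
    _ ≤ 2 := hcard

lemma core {n : ℕ} (c : Fin n → Bool) (pos : Fin n → Pt) (r : Fin n → Fin n → Prop)
    (hsymm : ∀ i j, r i j → r j i)
    (hadj : ∀ i j, r i j → adjPt (pos i) (pos j))
    (hH : ∀ i j, r i j → c i = true)
    (hdeg : ∀ v, c v = true → ((SimpleGraph.fromRel r).neighborSet v).ncard ≤ 2)
    (hcount : {e : Sym2 (Fin n) | ∃ i j, e = s(i,j) ∧ r i j}.ncard = hCount n c) :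
    IsDisjointUnionOfEvenCycles (SimpleGraph.fromRel r) := by
  classical
  set G := SimpleGraph.fromRel r with hG
  have hirr : ∀ i j, r i j → i ≠ j := by
    intro i j h he
    subst he
    exact adjPt_irrefl _ (hadj _ _ h)
  have hAdj_iff : ∀ i j, G.Adj i j ↔ r i j := by
    intro i j
    rw [hG, SimpleGraph.fromRel_adj]
    constructor
    · rintro ⟨hne, h | h⟩
      · exact h
      · exact hsymm _ _ h
    · intro h; exact ⟨hirr _ _ h, Or.inl h⟩
  have hES : G.edgeSet = {e : Sym2 (Fin n) | ∃ i j, e = s(i,j) ∧ r i j} := by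
    ext e
    induction e using Sym2.ind with
    | _ a b =>
      simp only [SimpleGraph.mem_edgeSet, hAdj_iff, Set.mem_setOf_eq]
      constructor
      · intro h; exact ⟨a, b, rfl, h⟩
      · rintro ⟨i, j, he, h⟩
        rcases Sym2.eq_iff.mp he with ⟨rfl, rfl⟩ | ⟨rfl, rfl⟩
        · exact h
        · exact hsymm _ _ h
  have hdegree : ∀ v, G.degree v = (G.neighborSet v).ncard := by
    intro v
    rw [Set.ncard_eq_toFinset_card']
    rfl
  have hdeg0 : ∀ v, c v ≠ true → G.degree v = 0 := by
    intro v hv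
    rw [hdegree]
    have : G.neighborSet v = ∅ := by
      ext u
      simp only [SimpleGraph.mem_neighborSet, hAdj_iff, Set.mem_empty_iff_false, iff_false]
      intro h
      exact hv (hH _ _ h)
    rw [this, Set.ncard_empty]
  have hcard_edges : G.edgeFinset.card = hCount n c := by
    have h1 : (G.edgeSet).ncard = hCount n c := by rw [hES]; exact hcount
    rwa [Set.ncard_eq_toFinset_card'] at h1
  have hsum := SimpleGraph.sum_degrees_eq_twice_card_edges G
  set s := Finset.univ.filter (fun v : Fin n => c v = true) with hs
  have hsum2 : ∑ v ∈ s, G.degree v = 2 * s.card := by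
    have hsplit : ∑ v ∈ Finset.univ, G.degree v = ∑ v ∈ s, G.degree v := by
      rw [← Finset.sum_filter_add_sum_filter_not Finset.univ (fun v => c v = true)]
      have : ∑ v ∈ Finset.univ.filter (fun v : Fin n => ¬ c v = true), G.degree v = 0 :=
        Finset.sum_eq_zero fun v hv => hdeg0 v (Finset.mem_filter.mp hv).2
      rw [this, add_zero]
    rw [← hsplit, hsum, hcard_edges]
    rfl
  have hdeg2 : ∀ v ∈ s, G.degree v = 2 := by
    by_contra h
    push_neg at h
    obtain ⟨v, hv, hne⟩ := h
    have hle : ∀ i ∈ s, G.degree i ≤ 2 := by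
      intro i hi
      rw [hdegree]
      exact hdeg i (Finset.mem_filter.mp hi).2
    have hlt : ∑ v ∈ s, G.degree v < ∑ _v ∈ s, 2 :=
      Finset.sum_lt_sum hle ⟨v, hv, lt_of_le_of_ne (hle v hv) hne⟩
    rw [hsum2, Finset.sum_const, smul_eq_mul] at hlt
    omega
  constructor
  · intro v
    by_cases hv : c v = true
    · right; rw [← hdegree]; exact hdeg2 v (Finset.mem_filter.mpr ⟨Finset.mem_univ _, hv⟩)
    · left; rw [← hdegree]; exact hdeg0 v hv
  · refine ⟨SimpleGraph.Coloring.mk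
      (fun v => ⟨((pos v).1 + (pos v).2).natAbs % 2, by omega⟩) ?_⟩
    intro a b hab hc
    have hr : r a b ∨ r b a := ((SimpleGraph.fromRel_adj r a b).mp hab).2
    have hpq : adjPt (pos a) (pos b) := by
      rcases hr with h | h
      · exact hadj _ _ h
      · exact adjPt_symm (hadj _ _ h)
    have := adjPt_parity hpq
    exact this (congrArg Fin.val hc)


lemma mod_facts (n v : ℕ) (hn : 3 ≤ n) (hv : v < n) :
    ((v + n - 1) % n + 1) % n = v ∧ (v + 1) % n ≠ (v + n - 1) % n := by
  have h1 : (v + n - 1) % n = if v = 0 then n - 1 else v - 1 := by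
    split_ifs with h
    · rw [show v + n - 1 = n - 1 from by omega]
      exact Nat.mod_eq_of_lt (by omega)
    · rw [show v + n - 1 = n + (v - 1) from by omega, Nat.add_mod_left]
      exact Nat.mod_eq_of_lt (by omega)
  have h2 : (v + 1) % n = if v + 1 = n then 0 else v + 1 := by
    split_ifs with h
    · rw [h, Nat.mod_self]
    · exact Nat.mod_eq_of_lt (by omega)
  constructor
  · rw [h1]
    split_ifs with h
    · rw [show n - 1 + 1 = n from by omega, Nat.mod_self]; omega
    · rw [show v - 1 + 1 = v from by omega]; exact Nat.mod_eq_of_lt hv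
  · rw [h1, h2]; split_ifs <;> omega

/-- If a folding of a closed HP chain with `h` H monomers, or of an open HP
chain with `h` H monomers whose two endpoints are labeled P, has exactly `h` contacts, then
its contact graph is a disjoint union of cycles of even length. -/
theorem contactGraph_isDisjointUnionOfEvenCycles_of_max_contacts
    (n : ℕ) (hn : 0 < n) (c : Fin n → Bool) (pos : Fin n → Pt) :
    (IsClosedFolding n pos → closedContacts n c pos = hCount n c →
      IsDisjointUnionOfEvenCycles (closedContactGraph n c pos)) ∧
    (IsOpenFolding n pos → c ⟨0, hn⟩ = false → c ⟨n - 1, by omega⟩ = false →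
      openContacts n c pos = hCount n c →
      IsDisjointUnionOfEvenCycles (openContactGraph n c pos)) := by
  constructor
  · -- closed chain case
    intro hf hcnt
    obtain ⟨hinj, hstep⟩ := hf
    apply core c pos (closedContactRel n c pos)
    · rintro i j ⟨h1, h2, h3, h4⟩
      exact ⟨h2, h1, fun h => h3 h.symm, adjPt_symm h4⟩
    · exact fun i j h => h.2.2.2
    · exact fun i j h => h.1
    · intro v hv
      rcases le_or_gt n 2 with h2 | h3
      · -- n ≤ 2 : no contacts at all
        have hempty : (SimpleGraph.fromRel (closedContactRel n c pos)).neighborSet v = ∅ := by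
          ext u
          simp only [SimpleGraph.mem_neighborSet, SimpleGraph.fromRel_adj,
            Set.mem_empty_iff_false, iff_false, not_and]
          intro hvu hrel
          have hc : closedAdj n v u := by
            rcases (show n = 1 ∨ n = 2 from by omega) with rfl | rfl
            · exact absurd (Fin.ext (by omega : v.val = u.val)) hvu
            · left
              have h1 := v.isLt
              have h2 := u.isLt
              have h3 : v.val ≠ u.val := fun h => hvu (Fin.ext h)
              show (v.val + 1) % 2 = u.val
              omega
          rcases hrel with ⟨_, _, h3, _⟩ | ⟨_, _, h3, _⟩
          · exact h3 hc
          · exact h3 hc.symm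
        rw [hempty, Set.ncard_empty]; omega
      · -- n ≥ 3 : use the two chain neighbors
        have hprevlt : (v.val + n - 1) % n < n := Nat.mod_lt _ (by omega)
        have hnextlt : (v.val + 1) % n < n := Nat.mod_lt _ (by omega)
        set a : Fin n := ⟨(v.val + n - 1) % n, hprevlt⟩ with ha
        set b : Fin n := ⟨(v.val + 1) % n, hnextlt⟩ with hb
        obtain ⟨hm1, hm2⟩ := mod_facts n v.val (by omega) v.isLt
        refine deg_le_two hinj (fun i j h => h.2.2.2) v a b ?_ ?_ ?_ ?_
        · intro h
          exact hm2 (congrArg Fin.val h).symm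
        · exact adjPt_symm (hstep a v hm1)
        · exact hstep v b rfl
        · intro u hu
          constructor
          · intro he
            subst he
            rcases hu with ⟨_, _, h3, _⟩ | ⟨_, _, h3, _⟩
            · exact h3 (Or.inr hm1)
            · exact h3 (Or.inl hm1)
          · intro he
            subst he
            rcases hu with ⟨_, _, h3, _⟩ | ⟨_, _, h3, _⟩
            · exact h3 (Or.inl rfl)
            · exact h3 (Or.inr rfl)
    · exact hcnt
  · -- open chain case
    intro hf h0 hlast hcnt
    obtain ⟨hinj, hstep⟩ := hf
    apply core c pos (openContactRel n c pos)
    · rintro i j ⟨h1, h2, h3, h4⟩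
      exact ⟨h2, h1, fun h => h3 h.symm, adjPt_symm h4⟩
    · exact fun i j h => h.2.2.2
    · exact fun i j h => h.1
    · intro v hv
      have hv0 : v.val ≠ 0 := by
        intro h
        rw [show v = ⟨0, hn⟩ from Fin.ext h] at hv
        rw [h0] at hv
        exact Bool.false_ne_true hv
      have hvlast : v.val ≠ n - 1 := by
        intro h
        rw [show v = ⟨n - 1, by omega⟩ from Fin.ext h] at hv
        rw [hlast] at hv
        exact Bool.false_ne_true hv
      have hvlt := v.isLt
      set a : Fin n := ⟨v.val - 1, by omega⟩ with ha
      set b : Fin n := ⟨v.val + 1, by omega⟩ with hb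
      refine deg_le_two hinj (fun i j h => h.2.2.2) v a b ?_ ?_ ?_ ?_
      · intro h
        have := congrArg Fin.val h
        simp only [ha, hb] at this
        omega
      · exact adjPt_symm (hstep a v (by show v.val - 1 + 1 = v.val; omega))
      · exact hstep v b rfl
      · intro u hu
        have hprev : (a.val : ℕ) + 1 = v.val := by show v.val - 1 + 1 = v.val; omega
        constructor
        · intro he
          subst he
          rcases hu with ⟨_, _, h3, _⟩ | ⟨_, _, h3, _⟩
          · exact h3 (Or.inr hprev)
          · exact h3 (Or.inl hprev)
        · intro he
          subst he
          rcases hu with ⟨_, _, h3, _⟩ | ⟨_, _, h3, _⟩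
          · exact h3 (Or.inl rfl)
          · exact h3 (Or.inr rfl)
    · exact hcnt
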